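/- arXiv:2411.18992 — 3 statements merged into one kernel-verified Lean document; each statement's English description precedes it below -/
import Mathlib

section
/- Let m ≥ 3 and let n be a positive multiple of 11, and let 0 ≤ ℓ < n. Suppose there exist an integer k and a ∈ {1,2} such that ℓ = (11k + (−1)^a·3m) mod n. Then the λ-number of the strong graph bundle C_m ⊠^{σ_ℓ} C_n is at most 10. -/
/-- One-directional step relation for the strong graph bundle `C_m ⊠^{σ_ℓ} C_n`:
(i) fiber edges, (ii) base steps `i → i+1` for `0 ≤ i ≤ m-2`,
(iii) seam edges from fiber over `m-1` to fiber over `0`, twisted by the cyclic `ℓ`-shift. -/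
def bundleStep (m n ℓ : ℕ) (u v : Fin m × ZMod n) : Prop :=
  (u.1 = v.1 ∧ (v.2 = u.2 + 1 ∨ v.2 = u.2 - 1)) ∨
  ((u.1 : ℕ) + 1 = (v.1 : ℕ) ∧ (v.2 = u.2 - 1 ∨ v.2 = u.2 ∨ v.2 = u.2 + 1)) ∨
  ((u.1 : ℕ) = m - 1 ∧ (v.1 : ℕ) = 0 ∧
    (v.2 = u.2 + (ℓ : ZMod n) - 1 ∨ v.2 = u.2 + (ℓ : ZMod n) ∨ v.2 = u.2 + (ℓ : ZMod n) + 1))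

/-- The strong graph bundle `C_m ⊠^{σ_ℓ} C_n` with base cycle `C_m`, fiber cycle `C_n`
and cyclic `ℓ`-shift. -/
def strongBundle (m n ℓ : ℕ) : SimpleGraph (Fin m × ZMod n) where
  Adj u v := u ≠ v ∧ (bundleStep m n ℓ u v ∨ bundleStep m n ℓ v u)
  symm := ⟨fun u v ⟨h1, h2⟩ => ⟨h1.symm, h2.symm⟩⟩
  loopless := ⟨fun u h => h.1 rfl⟩

/-- `f` is an `L(2,1)`-labeling of `G`: labels of adjacent vertices differ by at least 2,
labels of vertices at distance 2 differ by at least 1. -/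
def IsL21Labeling {V : Type*} (G : SimpleGraph V) (f : V → ℕ) : Prop :=
  (∀ u v, G.Adj u v → 2 ≤ |(f u : ℤ) - (f v : ℤ)|) ∧
  (∀ u v, G.dist u v = 2 → 1 ≤ |(f u : ℤ) - (f v : ℤ)|)

/-- The span of a labeling: largest label minus smallest label. -/
noncomputable def spanOf {V : Type*} (f : V → ℕ) : ℕ :=
  sSup (Set.range f) - sInf (Set.range f)

/-- The `λ`-number of `G`: the minimum span over all `L(2,1)`-labelings of `G`. -/
noncomputable def lambdaNumber {V : Type*} (G : SimpleGraph V) : ℕ :=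
  sInf { s : ℕ | ∃ f : V → ℕ, IsL21Labeling G f ∧ spanOf f = s }

/-!
Label the vertex `(i, j)` by `2 (r i + j) mod 11`, where `r = ±3` and `ℓ ≡ r m (mod 11)`; the
hypothesis on `ℓ` is exactly what makes this formula consistent across the twisted seam, and
`11 ∣ n` makes it well defined on the fiber. Every edge is a move by `s ∈ {-1, 0, 1}` along the
base and `d ∈ {-1, 0, 1}` along the fiber, changing the label by `2 (r s + d)` with
`0 < |r s + d| ≤ 4`, so adjacent labels are at cyclic distance at least `2` modulo `11`. Along a
path of length two the label changes by `2 (r S + D)` with `|S|, |D| ≤ 2`, which vanishes modulo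
`11` only if `S = D = 0`, i.e. only if the second move undoes the first.
-/

section Labeling

variable {V : Type*} {G : SimpleGraph V}

lemma SimpleGraph.exists_adj_adj_of_dist_eq_two {u v : V} (h : G.dist u v = 2) :
    u ≠ v ∧ ∃ x, G.Adj u x ∧ G.Adj x v := by
  have hreach := (G.dist_ne_zero_iff_ne_and_reachable.mp (h ▸ two_ne_zero)).2
  have hedist : G.edist u v = 2 := by rw [← hreach.coe_dist_eq_edist, h]; rfl
  obtain ⟨hne, -, x, hx⟩ := G.edist_eq_two_iff.mp hedist
  rw [mem_commonNeighbors] at hx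
  exact ⟨hne, x, hx.1, hx.2.symm⟩

lemma spanOf_le {f : V → ℕ} {b : ℕ} (h : ∀ v, f v ≤ b) : spanOf f ≤ b :=
  (Nat.sub_le _ _).trans (csSup_le' (Set.forall_mem_range.mpr h))

lemma lambdaNumber_le_spanOf {f : V → ℕ} (hf : IsL21Labeling G f) : lambdaNumber G ≤ spanOf f :=
  Nat.sInf_le ⟨f, hf, rfl⟩

lemma ZMod.two_le_abs_val_sub {N : ℕ} [NeZero N] {x y : ZMod N}
    (h : ∀ e : ℤ, |e| ≤ 1 → x - y ≠ e) : 2 ≤ |(x.val : ℤ) - y.val| := by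
  by_contra! hlt
  refine h _ (Int.lt_add_one_iff.mp hlt) ?_
  push_cast
  rw [ZMod.natCast_zmod_val, ZMod.natCast_zmod_val]

theorem isL21Labeling_val {N : ℕ} [NeZero N] (φ : V → ZMod N)
    (hadj : ∀ u v, G.Adj u v → ∀ e : ℤ, |e| ≤ 1 → φ u - φ v ≠ e)
    (hpath : ∀ u x v, G.Adj u x → G.Adj x v → φ u = φ v → u = v) :
    IsL21Labeling G fun v => (φ v).val := by
  refine ⟨fun u v huv => ZMod.two_le_abs_val_sub (hadj u v huv), fun u v huv => ?_⟩
  obtain ⟨hne, x, hux, hxv⟩ := G.exists_adj_adj_of_dist_eq_two huv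
  have hval : (φ u).val ≠ (φ v).val :=
    (ZMod.val_injective N).ne fun h => hne (hpath u x v hux hxv h)
  exact Int.one_le_abs (sub_ne_zero.mpr (by exact_mod_cast hval))

end Labeling

section Bundle

variable {m n ℓ : ℕ} {s d : ℤ} {u v x : Fin m × ZMod n}

def bundleForward (m n ℓ : ℕ) (d : ℤ) (u v : Fin m × ZMod n) : Prop :=
  ((u.1 : ℕ) + 1 = v.1 ∧ v.2 = u.2 + d) ∨
    ((u.1 : ℕ) = m - 1 ∧ (v.1 : ℕ) = 0 ∧ v.2 = u.2 + ℓ + d)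

def bundleMove (m n ℓ : ℕ) (s d : ℤ) (u v : Fin m × ZMod n) : Prop :=
  (s = 0 ∧ u.1 = v.1 ∧ v.2 = u.2 + d) ∨ (s = 1 ∧ bundleForward m n ℓ d u v) ∨
    (s = -1 ∧ bundleForward m n ℓ (-d) v u)

lemma bundleForward.left_unique (hu : bundleForward m n ℓ d u x)
    (hv : bundleForward m n ℓ d v x) : u = v := by
  rcases hu with ⟨hu1, hu2⟩ | ⟨hu1, hx1, hu2⟩ <;> rcases hv with ⟨hv1, hv2⟩ | ⟨hv1, hx1', hv2⟩
  · exact Prod.ext (Fin.ext (by omega)) (add_right_cancel (hu2.symm.trans hv2))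
  · omega
  · omega
  · exact Prod.ext (Fin.ext (by omega)) (add_right_cancel (add_right_cancel (hu2.symm.trans hv2)))

lemma bundleForward.right_unique (hu : bundleForward m n ℓ d x u)
    (hv : bundleForward m n ℓ d x v) : u = v := by
  rcases hu with ⟨hu1, hu2⟩ | ⟨hx1, hu1, hu2⟩ <;> rcases hv with ⟨hv1, hv2⟩ | ⟨hx1', hv1, hv2⟩
  · exact Prod.ext (Fin.ext (by omega)) (hu2.trans hv2.symm)
  · have := u.1.isLt; omega
  · have := v.1.isLt; omega
  · exact Prod.ext (Fin.ext (by omega)) (hu2.trans hv2.symm)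

lemma bundleMove.symm (h : bundleMove m n ℓ s d u v) : bundleMove m n ℓ (-s) (-d) v u := by
  rcases h with ⟨rfl, h1, h2⟩ | ⟨rfl, h⟩ | ⟨rfl, h⟩
  · exact Or.inl ⟨neg_zero, h1.symm, by rw [h2]; push_cast; ring⟩
  · exact Or.inr (Or.inr ⟨rfl, by rwa [neg_neg]⟩)
  · exact Or.inr (Or.inl ⟨neg_neg 1, h⟩)

lemma bundleMove.left_unique (hu : bundleMove m n ℓ s d u x)
    (hv : bundleMove m n ℓ s d v x) : u = v := by
  rcases hu with ⟨rfl, hu1, hu2⟩ | ⟨rfl, hu⟩ | ⟨rfl, hu⟩ <;>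
    rcases hv with ⟨hs, hv1, hv2⟩ | ⟨hs, hv⟩ | ⟨hs, hv⟩ <;> try norm_num at hs
  · exact Prod.ext (hu1.trans hv1.symm) (add_right_cancel (hu2.symm.trans hv2))
  · exact hu.left_unique hv
  · exact hu.right_unique hv

lemma exists_abs_le_one_eq_add_intCast {R : Type*} [Ring R] {a b : R}
    (h : b = a - 1 ∨ b = a ∨ b = a + 1) : ∃ d : ℤ, |d| ≤ 1 ∧ b = a + d := by
  rcases h with h | h | h
  exacts [⟨-1, by norm_num, by simp [h, sub_eq_add_neg]⟩, ⟨0, by norm_num, by simp [h]⟩,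
    ⟨1, by norm_num, by simp [h]⟩]

lemma bundleStep.exists_bundleMove (h : bundleStep m n ℓ u v) :
    ∃ s d : ℤ, |s| ≤ 1 ∧ |d| ≤ 1 ∧ (s ≠ 0 ∨ d ≠ 0) ∧ bundleMove m n ℓ s d u v := by
  rcases h with ⟨h1, h2 | h2⟩ | ⟨h1, h2⟩ | ⟨h1, h0, h2⟩
  · exact ⟨0, 1, by norm_num, by norm_num, by norm_num, Or.inl ⟨rfl, h1, by simp [h2]⟩⟩
  · exact ⟨0, -1, by norm_num, by norm_num, by norm_num,
      Or.inl ⟨rfl, h1, by simp [h2, sub_eq_add_neg]⟩⟩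
  · obtain ⟨d, hd, h2⟩ := exists_abs_le_one_eq_add_intCast h2
    exact ⟨1, d, by norm_num, hd, by norm_num, Or.inr (Or.inl ⟨rfl, Or.inl ⟨h1, h2⟩⟩)⟩
  · obtain ⟨d, hd, h2⟩ := exists_abs_le_one_eq_add_intCast h2
    exact ⟨1, d, by norm_num, hd, by norm_num, Or.inr (Or.inl ⟨rfl, Or.inr ⟨h1, h0, h2⟩⟩)⟩

lemma exists_bundleMove_of_adj (h : (strongBundle m n ℓ).Adj u v) :
    ∃ s d : ℤ, |s| ≤ 1 ∧ |d| ≤ 1 ∧ (s ≠ 0 ∨ d ≠ 0) ∧ bundleMove m n ℓ s d u v := by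
  rcases h.2 with h | h
  · exact h.exists_bundleMove
  · obtain ⟨s, d, hs, hd, hsd, hmove⟩ := h.exists_bundleMove
    exact ⟨-s, -d, by rwa [abs_neg], by rwa [abs_neg], by simpa using hsd, hmove.symm⟩

def bundleLabel {k : ℕ} (hk : k ∣ n) (r : ℤ) (u : Fin m × ZMod n) : ZMod k :=
  r * ((u.1 : ℕ) : ZMod k) + ZMod.castHom hk (ZMod k) u.2

lemma bundleLabel_of_bundleForward {k : ℕ} (hk : k ∣ n) {r : ℤ} (hℓ : (ℓ : ZMod k) = r * m)
    (h : bundleForward m n ℓ d u v) :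
    bundleLabel hk r v = bundleLabel hk r u + (r + d : ℤ) := by
  rcases h with ⟨h1, h2⟩ | ⟨h1, h0, h2⟩
  · simp only [bundleLabel, ← h1, h2, map_add, map_intCast]
    push_cast
    ring
  · have hm : ((m - 1 : ℕ) : ZMod k) = m - 1 := by rw [Nat.cast_sub (Nat.one_le_of_lt u.1.isLt), Nat.cast_one]
    simp only [bundleLabel, h1, h0, h2, map_add, map_natCast, map_intCast, hm]
    push_cast
    linear_combination hℓ

lemma bundleLabel_of_bundleMove {k : ℕ} (hk : k ∣ n) {r : ℤ} (hℓ : (ℓ : ZMod k) = r * m)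
    (h : bundleMove m n ℓ s d u v) :
    bundleLabel hk r v = bundleLabel hk r u + (r * s + d : ℤ) := by
  rcases h with ⟨rfl, h1, h2⟩ | ⟨rfl, h⟩ | ⟨rfl, h⟩
  · simp only [bundleLabel, h1, h2, map_add, map_intCast]
    push_cast
    ring
  · rw [bundleLabel_of_bundleForward hk hℓ h]
    push_cast
    ring
  · rw [bundleLabel_of_bundleForward hk hℓ h]
    push_cast
    ring

theorem isL21Labeling_two_mul_bundleLabel (hn : 11 ∣ n) {r : ℤ} (hr : r = 3 ∨ r = -3)
    (hℓ : (ℓ : ZMod 11) = r * m) :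
    IsL21Labeling (strongBundle m n ℓ) fun u => (2 * bundleLabel hn r u).val := by
  apply isL21Labeling_val
  · intro u v huv e he heq
    obtain ⟨s, d, hs, hd, hsd, hmove⟩ := exists_bundleMove_of_adj huv
    rw [bundleLabel_of_bundleMove hn hℓ hmove] at heq
    have hdvd : (11 : ℤ) ∣ 2 * (r * s + d) + e := by
      refine (ZMod.intCast_zmod_eq_zero_iff_dvd _ 11).mp ?_
      push_cast at heq ⊢
      linear_combination -heq
    rw [abs_le] at hs hd he
    have hz := Int.eq_zero_of_abs_lt_dvd hdvd (abs_lt.mpr (by rcases hr with rfl | rfl <;> omega))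
    rcases hr with rfl | rfl <;> omega
  · intro u x v hux hxv huv
    obtain ⟨s₁, d₁, hs₁, hd₁, -, h₁⟩ := exists_bundleMove_of_adj hux
    obtain ⟨s₂, d₂, hs₂, hd₂, -, h₂⟩ := exists_bundleMove_of_adj hxv
    rw [bundleLabel_of_bundleMove hn hℓ h₂, bundleLabel_of_bundleMove hn hℓ h₁] at huv
    have hdvd : (11 : ℤ) ∣ 2 * (r * (s₁ + s₂) + (d₁ + d₂)) := by
      refine (ZMod.intCast_zmod_eq_zero_iff_dvd _ 11).mp ?_
      push_cast at huv ⊢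
      linear_combination -huv
    rw [abs_le] at hs₁ hd₁ hs₂ hd₂
    have hz := Int.eq_zero_of_abs_lt_dvd hdvd (abs_lt.mpr (by rcases hr with rfl | rfl <;> omega))
    obtain ⟨rfl, rfl⟩ : s₁ = -s₂ ∧ d₁ = -d₂ := by rcases hr with rfl | rfl <;> omega
    exact h₁.left_unique h₂.symm

end Bundle

theorem lambda_strongBundle_le_ten_three_general (m n ℓ : ℕ) (hn : 11 ∣ n)
    (h : ∃ k : ℤ, ∃ a ∈ ({1, 2} : Set ℕ),
      (ℓ : ℤ) = (11 * k + (-1 : ℤ) ^ a * (3 * m)) % n) :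
    lambdaNumber (strongBundle m n ℓ) ≤ 10 := by
  obtain ⟨k, a, -, hℓ⟩ := h
  have hℓ11 : (ℓ : ZMod 11) = ((-1) ^ a * 3 : ℤ) * m := by
    have hmod : ((ℓ : ℤ) : ZMod 11) = ((11 * k + (-1) ^ a * (3 * m) : ℤ) : ZMod 11) := by
      rw [ZMod.intCast_eq_intCast_iff, hℓ]
      exact Int.emod_emod_of_dvd _ (by exact_mod_cast hn)
    push_cast at hmod ⊢
    rw [hmod, show (11 : ZMod 11) = 0 from rfl]
    ring
  have hr : (-1 : ℤ) ^ a * 3 = 3 ∨ (-1 : ℤ) ^ a * 3 = -3 := by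
    rcases neg_one_pow_eq_or ℤ a with h | h <;> simp [h]
  calc lambdaNumber (strongBundle m n ℓ)
      ≤ spanOf fun u => (2 * bundleLabel hn ((-1) ^ a * 3) u).val :=
        lambdaNumber_le_spanOf (isL21Labeling_two_mul_bundleLabel hn hr hℓ11)
    _ ≤ 10 := spanOf_le fun _ => Nat.le_of_lt_succ (ZMod.val_lt _)

theorem lambda_strongBundle_le_ten_three (m n ℓ : ℕ) (hm : 3 ≤ m) (hn : 11 ∣ n) (hn0 : 0 < n)
    (hℓ : ℓ < n)
    (h : ∃ k : ℤ, ∃ a ∈ ({1, 2} : Set ℕ),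
      (ℓ : ℤ) = (11 * k + (-1 : ℤ) ^ a * (3 * m)) % n) :
    lambdaNumber (strongBundle m n ℓ) ≤ 10 :=
  lambda_strongBundle_le_ten_three_general m n ℓ hn h
end

section
/- Let m ≥ 3 and let n be a positive multiple of 11, and let 0 ≤ ℓ < n. Suppose there exists an integer k such that ℓ = (11k + 4m) mod n. Then the map f₂ defined on the vertices of the strong graph bundle C_m ⊠^{σ_ℓ} C_n by f₂(i,j) = (2i + 6j) mod 11 is an L(2,1)-labeling whose labels all lie in {0,1,…,10}. -/
/-! The bundle is the quotient of the king's graph on `ℤ × ℤ` under the covering map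
`(x, y) ↦ (x mod m, y + ℓ ⌊x / m⌋)`. Since `11 ∣ n` and `6ℓ ≡ 2m (mod 11)`, the label
`2x + 6y mod 11` is constant on fibres of this covering, so along a king move `(a, b)` the
label changes by `2a + 6b mod 11`. The eight values `±2, ±6, ±8, ±4` are distinct and avoid
`0, ±1`: the first fact makes the label injective on every neighbourhood (the distance-two
condition), the second gives the distance-one condition. -/

open SimpleGraph

theorem IsL21Labeling.of_injOn_neighborSet {V : Type*} {G : SimpleGraph V} {f : V → ℕ}
    (hadj : ∀ u v, G.Adj u v → 2 ≤ |(f u : ℤ) - (f v : ℤ)|)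
    (hinj : ∀ w, Set.InjOn f (G.neighborSet w)) :
    IsL21Labeling G f := by
  refine ⟨hadj, fun u v huv ↦ ?_⟩
  have hreach : G.Reachable u v := Reachable.of_dist_ne_zero (by omega)
  have hedist : G.edist u v = 2 := by rw [← hreach.coe_dist_eq_edist, huv]; rfl
  obtain ⟨hne, -, w, hw⟩ := edist_eq_two_iff.mp hedist
  rw [mem_commonNeighbors] at hw
  have hf : f u ≠ f v := fun h ↦ hne (hinj w hw.1.symm hw.2.symm h)
  exact Int.one_le_abs (by omega)

def IsKingMove (a b : ℤ) : Prop :=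
  a ∈ Set.Icc (-1) 1 ∧ b ∈ Set.Icc (-1) 1 ∧ (a ≠ 0 ∨ b ≠ 0)

namespace IsKingMove

variable {a b : ℤ}

theorem neg (h : IsKingMove a b) : IsKingMove (-a) (-b) := by
  obtain ⟨⟨ha, ha'⟩, ⟨hb, hb'⟩, h0⟩ := h
  exact ⟨⟨by omega, by omega⟩, ⟨by omega, by omega⟩, by omega⟩

theorem two_le_abs_sub {x y : ℕ} (h : IsKingMove a b)
    (hxy : (y : ZMod 11) = x + 2 * a + 6 * b) : 2 ≤ |(x : ℤ) - y| := by
  obtain ⟨⟨ha, ha'⟩, ⟨hb, hb'⟩, h0⟩ := h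
  obtain ⟨e, he⟩ : ((11 : ℕ) : ℤ) ∣ (x + 2 * a + 6 * b) - y :=
    (ZMod.intCast_eq_intCast_iff_dvd_sub _ _ _).mp (by push_cast; exact hxy)
  by_contra! hlt
  rw [abs_lt] at hlt
  have he0 : e = 0 := by omega
  omega

theorem eq_of_zmod_eq {a' b' : ℤ} (h : IsKingMove a b) (h' : IsKingMove a' b')
    (hab : (2 * a + 6 * b : ZMod 11) = 2 * a' + 6 * b') : a = a' ∧ b = b' := by
  obtain ⟨⟨ha, ha'⟩, ⟨hb, hb'⟩, -⟩ := h
  obtain ⟨⟨ha₂, ha₂'⟩, ⟨hb₂, hb₂'⟩, -⟩ := h'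
  obtain ⟨e, he⟩ : ((11 : ℕ) : ℤ) ∣ (2 * a' + 6 * b') - (2 * a + 6 * b) :=
    (ZMod.intCast_eq_intCast_iff_dvd_sub _ _ _).mp (by push_cast; exact hab)
  have he0 : e = 0 := by omega
  omega

end IsKingMove

namespace StrongBundle

variable {m n ℓ : ℕ} {w u v : Fin m × ZMod n} {a b : ℤ}

/-- `u` is the image of `(w.1 + a, w.2 + b)` under the covering map
`ℤ × ℤ → Fin m × ZMod n, (x, y) ↦ (x mod m, y + ℓ ⌊x / m⌋)`. -/
def IsOffset (ℓ : ℕ) (w u : Fin m × ZMod n) (a b : ℤ) : Prop :=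
  ∃ q : ℤ, (u.1 : ℤ) = w.1 + a - m * q ∧ u.2 = w.2 + b + ℓ * q

theorem IsOffset.symm (h : IsOffset ℓ w u a b) : IsOffset ℓ u w (-a) (-b) := by
  obtain ⟨q, h1, h2⟩ := h
  exact ⟨-q, by linear_combination -h1, by rw [h2]; push_cast; ring⟩

theorem IsOffset.unique (hu : IsOffset ℓ w u a b) (hv : IsOffset ℓ w v a b) : u = v := by
  obtain ⟨q, hu1, hu2⟩ := hu
  obtain ⟨q', hv1, hv2⟩ := hv
  have hm : (0 : ℤ) < m := by have := w.1.pos; omega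
  have hdiff : (u.1 : ℤ) - v.1 = m * (q' - q) := by linear_combination hu1 - hv1
  have hq : q' - q = 0 := by
    refine (mul_eq_zero.mp (Int.eq_zero_of_abs_lt_dvd ⟨q' - q, rfl⟩ ?_)).resolve_left hm.ne'
    rw [← hdiff, abs_lt]
    omega
  refine Prod.ext (Fin.ext ?_) ?_
  · rw [hq, mul_zero] at hdiff
    omega
  · rw [hu2, hv2, sub_eq_zero.mp hq]

def linearLabel (k α β : ℕ) (v : Fin m × ZMod n) : ℕ := (α * (v.1 : ℕ) + β * v.2.val) % k

theorem IsOffset.natCast_linearLabel {k α β : ℕ} [NeZero n] (hk : k ∣ n)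
    (hℓ : (β * ℓ : ZMod k) = α * m) (h : IsOffset ℓ w u a b) :
    (linearLabel k α β u : ZMod k) = linearLabel k α β w + α * a + β * b := by
  obtain ⟨q, h1, h2⟩ := h
  have h1' : ((u.1 : ℕ) : ZMod k) = (w.1 : ℕ) + a - m * q := by
    simpa using congrArg (Int.cast : ℤ → ZMod k) h1
  have h2' : ((u.2.val : ℕ) : ZMod k) = (w.2.val : ℕ) + b + ℓ * q := by
    have := congrArg (ZMod.castHom hk (ZMod k)) h2
    simp only [map_add, map_mul, map_intCast, map_natCast, ZMod.castHom_apply] at this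
    rwa [ZMod.natCast_val, ZMod.natCast_val]
  simp only [linearLabel, ZMod.natCast_mod, Nat.cast_add, Nat.cast_mul]
  linear_combination (α : ZMod k) * h1' + (β : ZMod k) * h2' + (q : ZMod k) * hℓ

theorem exists_isOffset_of_bundleStep (h : bundleStep m n ℓ w u) :
    ∃ a b, IsKingMove a b ∧ IsOffset ℓ w u a b := by
  have hw := w.1.isLt
  rcases h with ⟨h1, h2 | h2⟩ | ⟨h1, h2 | h2 | h2⟩ | ⟨h1, h1', h2 | h2 | h2⟩
  · exact ⟨0, 1, by norm_num [IsKingMove], 0, by simp [h1], by simp [h2]⟩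
  · exact ⟨0, -1, by norm_num [IsKingMove], 0, by simp [h1], by simp [h2, sub_eq_add_neg]⟩
  · exact ⟨1, -1, by norm_num [IsKingMove], 0, by simp [← h1], by simp [h2, sub_eq_add_neg]⟩
  · exact ⟨1, 0, by norm_num [IsKingMove], 0, by simp [← h1], by simp [h2]⟩
  · exact ⟨1, 1, by norm_num [IsKingMove], 0, by simp [← h1], by simp [h2]⟩
  · exact ⟨1, -1, by norm_num [IsKingMove], 1, by simp [h1']; omega, by rw [h2]; push_cast; ring⟩
  · exact ⟨1, 0, by norm_num [IsKingMove], 1, by simp [h1']; omega, by rw [h2]; push_cast; ring⟩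
  · exact ⟨1, 1, by norm_num [IsKingMove], 1, by simp [h1']; omega, by rw [h2]; push_cast; ring⟩

theorem exists_isOffset_of_adj (h : (strongBundle m n ℓ).Adj w u) :
    ∃ a b, IsKingMove a b ∧ IsOffset ℓ w u a b := by
  rcases h.2 with h | h
  · exact exists_isOffset_of_bundleStep h
  · obtain ⟨a, b, hab, hoff⟩ := exists_isOffset_of_bundleStep h
    exact ⟨-a, -b, hab.neg, hoff.symm⟩

section LinearLabel

variable [NeZero n] (hn : 11 ∣ n) (hℓ : (6 * ℓ : ZMod 11) = 2 * m)
include hn hℓ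

theorem IsOffset.natCast_linearLabel_two_six (h : IsOffset ℓ w u a b) :
    (linearLabel 11 2 6 u : ZMod 11) = linearLabel 11 2 6 w + 2 * a + 6 * b := by
  have hℓ' : ((6 : ℕ) * ℓ : ZMod 11) = (2 : ℕ) * m := by exact_mod_cast hℓ
  simpa using h.natCast_linearLabel hn hℓ'

theorem two_le_abs_linearLabel_sub_of_adj (h : (strongBundle m n ℓ).Adj w u) :
    2 ≤ |(linearLabel 11 2 6 w : ℤ) - linearLabel 11 2 6 u| := by
  obtain ⟨a, b, hab, hoff⟩ := exists_isOffset_of_adj h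
  exact hab.two_le_abs_sub (hoff.natCast_linearLabel_two_six hn hℓ)

theorem linearLabel_injOn_neighborSet (w : Fin m × ZMod n) :
    Set.InjOn (linearLabel 11 2 6) ((strongBundle m n ℓ).neighborSet w) := by
  intro u hu v hv huv
  obtain ⟨a, b, hab, hu⟩ := exists_isOffset_of_adj hu
  obtain ⟨a', b', hab', hv⟩ := exists_isOffset_of_adj hv
  have hlabel := congrArg (Nat.cast : ℕ → ZMod 11) huv
  rw [hu.natCast_linearLabel_two_six hn hℓ, hv.natCast_linearLabel_two_six hn hℓ,
    add_assoc, add_assoc, add_right_inj] at hlabel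
  obtain ⟨rfl, rfl⟩ := hab.eq_of_zmod_eq hab' hlabel
  exact hu.unique hv

end LinearLabel

end StrongBundle

open StrongBundle in
theorem f2_isL21Labeling_general (m n ℓ : ℕ) (hn : 11 ∣ n) (hn0 : 0 < n)
    (h : ∃ k : ℤ, (ℓ : ℤ) = (11 * k + 4 * m) % n) :
    IsL21Labeling (strongBundle m n ℓ)
      (fun v => (2 * (v.1 : ℕ) + 6 * v.2.val) % 11) ∧
    ∀ v : Fin m × ZMod n, (2 * (v.1 : ℕ) + 6 * v.2.val) % 11 ≤ 10 := by
  have : NeZero n := ⟨hn0.ne'⟩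
  have hℓ : (6 * ℓ : ZMod 11) = 2 * m := by
    obtain ⟨k, hk⟩ := h
    have hmod : (ℓ : ZMod 11) = ((11 * k + 4 * m : ℤ) : ZMod 11) := by
      rw [← Int.cast_natCast, hk, ← ZMod.intCast_mod _ 11,
        Int.emod_emod_of_dvd _ (by exact_mod_cast hn), ZMod.intCast_mod]
    have h11 : (11 : ZMod 11) = 0 := by decide
    rw [hmod]
    push_cast
    linear_combination (6 * k + 2 * m : ZMod 11) * h11
  exact ⟨.of_injOn_neighborSet (fun _ _ ↦ two_le_abs_linearLabel_sub_of_adj hn hℓ)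
    (linearLabel_injOn_neighborSet hn hℓ), fun v ↦ Nat.le_of_lt_succ (Nat.mod_lt _ (by norm_num))⟩

theorem f2_isL21Labeling (m n ℓ : ℕ) (hm : 3 ≤ m) (hn : 11 ∣ n) (hn0 : 0 < n) (hℓ : ℓ < n)
    (h : ∃ k : ℤ, (ℓ : ℤ) = (11 * k + 4 * m) % n) :
    IsL21Labeling (strongBundle m n ℓ)
      (fun v => (2 * (v.1 : ℕ) + 6 * v.2.val) % 11) ∧
    ∀ v : Fin m × ZMod n, (2 * (v.1 : ℕ) + 6 * v.2.val) % 11 ≤ 10 :=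
  f2_isL21Labeling_general m n ℓ hn hn0 h
end

section
/- For every ℓ ∈ {3, 5, 6, 8}, the λ-number of the strong graph bundle C₁₃ ⊠^{σ_ℓ} C₁₁ (base cycle of length 13, fiber cycle of length 11, cyclic ℓ-shift) equals 10. -/
/-!
Lower bound: away from the seam every vertex has eight neighbours, pairwise at distance at most
two, so they carry eight distinct labels. With span at most 9, a vertex whose label is not extreme
leaves only seven labels for them; so the three vertices of a triangle away from the seam would all
carry the minimum or the maximum label, which is impossible.

Upper bound: `(i, j) ↦ (α i + β j) mod 11` for suitable `α, β`. Along an edge or a path of length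
two the label changes by the image of the displacement of the endpoints, and the finitely many
possible displacements are checked by computation.
-/

open SimpleGraph Finset

theorem ZMod.two_le_abs_val_sub_s15 {k : ℕ} [NeZero k] {a b : ZMod k}
    (h : a - b ∉ ({-1, 0, 1} : Finset (ZMod k))) : 2 ≤ |(a.val : ℤ) - b.val| := by
  by_contra! hlt
  obtain hab | hab | hba : a.val = b.val ∨ a.val = b.val + 1 ∨ b.val = a.val + 1 := by
    rw [abs_lt] at hlt
    omega
  · simp [ZMod.val_injective k hab] at h
  · have : a = b + 1 := by rw [← ZMod.natCast_zmod_val a, hab]; push_cast; simp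
    simp [this] at h
  · have : b = a + 1 := by rw [← ZMod.natCast_zmod_val b, hba]; push_cast; simp
    simp [this] at h

theorem SimpleGraph.dist_eq_two_iff {V : Type*} {G : SimpleGraph V} {u v : V} :
    G.dist u v = 2 ↔ u ≠ v ∧ ¬G.Adj u v ∧ (G.commonNeighbors u v).Nonempty := by
  rw [SimpleGraph.dist, ENat.toNat_eq_iff two_ne_zero]
  exact edist_eq_two_iff

theorem apply_le_sInf_range_add_spanOf {V : Type*} [Finite V] (f : V → ℕ) (v : V) :
    f v ≤ sInf (Set.range f) + spanOf f := by
  have hsup : f v ≤ sSup (Set.range f) := le_csSup (Set.finite_range f).bddAbove ⟨v, rfl⟩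
  have hinf : sInf (Set.range f) ≤ f v := Nat.sInf_le ⟨v, rfl⟩
  unfold spanOf
  omega

theorem lambdaNumber_eq {V : Type*} {G : SimpleGraph V} {s : ℕ}
    (hex : ∃ f, IsL21Labeling G f ∧ spanOf f = s) (hle : ∀ f, IsL21Labeling G f → s ≤ spanOf f) :
    lambdaNumber G = s :=
  le_antisymm (Nat.sInf_le hex) (le_csInf ⟨s, hex⟩ (by rintro _ ⟨f, hf, rfl⟩; exact hle f hf))

theorem isL21Labeling_val_comp {V : Type*} {G : SimpleGraph V} {k : ℕ} [NeZero k] (c : V → ZMod k)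
    (hadj : ∀ u v, G.Adj u v → c v - c u ∉ ({-1, 0, 1} : Finset (ZMod k)))
    (hdist : ∀ u v, G.dist u v = 2 → c u ≠ c v) :
    IsL21Labeling G (fun v => (c v).val) := by
  refine ⟨fun u v h => ?_, fun u v h => ?_⟩
  · rw [abs_sub_comm]
    exact ZMod.two_le_abs_val_sub_s15 (hadj u v h)
  · refine Int.one_le_abs (sub_ne_zero.mpr ?_)
    exact_mod_cast (ZMod.val_injective k).ne (hdist u v h)

theorem spanOf_val_comp_of_surjective {V : Type*} {k : ℕ} [NeZero k] {c : V → ZMod k}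
    (hc : Function.Surjective c) : spanOf (fun v => (c v).val) = k - 1 := by
  have hk : k - 1 < k := Nat.sub_one_lt (NeZero.ne k)
  obtain ⟨vmax, hvmax⟩ := hc ((k - 1 : ℕ) : ZMod k)
  obtain ⟨vmin, hvmin⟩ := hc 0
  have hmax : IsGreatest (Set.range fun v => (c v).val) (k - 1) := by
    refine ⟨⟨vmax, by simp only [hvmax, ZMod.val_cast_of_lt hk]⟩, ?_⟩
    rintro _ ⟨v, rfl⟩
    exact Nat.le_sub_one_of_lt (ZMod.val_lt (c v))
  have hmin : IsLeast (Set.range fun v => (c v).val) 0 :=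
    ⟨⟨vmin, by simp [hvmin]⟩, fun _ _ => Nat.zero_le _⟩
  rw [spanOf, hmax.csSup_eq, hmin.csInf_eq, Nat.sub_zero]

namespace IsL21Labeling

variable {V : Type*} {G : SimpleGraph V} {f : V → ℕ}

theorem ne_of_adj (hf : IsL21Labeling G f) {u v : V} (h : G.Adj u v) : f u ≠ f v := by
  intro heq
  have := hf.1 u v h
  simp [heq] at this

theorem injOn_neighborSet (hf : IsL21Labeling G f) (v : V) : Set.InjOn f (G.neighborSet v) := by
  intro a ha b hb hab
  by_contra hne
  by_cases hadj : G.Adj a b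
  · exact hf.ne_of_adj hadj hab
  · have := hf.2 a b (dist_eq_two_iff.mpr ⟨hne, hadj, v, ha.symm, hb.symm⟩)
    simp [hab] at this

theorem eq_or_eq_of_le_degree_add_one [G.LocallyFinite] (hf : IsL21Labeling G f) {A s : ℕ}
    (hrange : ∀ u, A ≤ f u ∧ f u ≤ A + s) {v : V} (hdeg : s ≤ G.degree v + 1) :
    f v = A ∨ f v = A + s := by
  by_contra! hv
  have hsub : (G.neighborFinset v).image f ⊆ Ico A (f v - 1) ∪ Icc (f v + 2) (A + s) := by
    intro x hx
    obtain ⟨w, hw, rfl⟩ := mem_image.mp hx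
    have hgap := hf.1 v w ((G.mem_neighborFinset v w).mp hw)
    rw [le_abs] at hgap
    have := hrange w
    rw [mem_union, mem_Ico, mem_Icc]
    omega
  have hcard : ((G.neighborFinset v).image f).card = G.degree v := by
    rw [card_image_of_injOn (by simpa using hf.injOn_neighborSet v), card_neighborFinset_eq_degree]
  have hle := (card_le_card hsub).trans (card_union_le _ _)
  rw [hcard, Nat.card_Ico, Nat.card_Icc] at hle
  have := hrange v
  omega

theorem add_two_le_spanOf [Finite V] [G.LocallyFinite] (hf : IsL21Labeling G f) {x y z : V}
    (hxy : G.Adj x y) (hxz : G.Adj x z) (hyz : G.Adj y z) {d : ℕ}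
    (hx : d ≤ G.degree x) (hy : d ≤ G.degree y) (hz : d ≤ G.degree z) : d + 2 ≤ spanOf f := by
  by_contra! hs
  have hrange : ∀ u, sInf (Set.range f) ≤ f u ∧ f u ≤ sInf (Set.range f) + spanOf f :=
    fun u => ⟨Nat.sInf_le ⟨u, rfl⟩, apply_le_sInf_range_add_spanOf f u⟩
  have := hf.eq_or_eq_of_le_degree_add_one hrange (v := x) (by omega)
  have := hf.eq_or_eq_of_le_degree_add_one hrange (v := y) (by omega)
  have := hf.eq_or_eq_of_le_degree_add_one hrange (v := z) (by omega)
  have := hf.ne_of_adj hxy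
  have := hf.ne_of_adj hxz
  have := hf.ne_of_adj hyz
  omega

end IsL21Labeling

namespace strongBundle

variable {m n ℓ : ℕ}

instance instDecidableRelAdj (m n ℓ : ℕ) : DecidableRel (strongBundle m n ℓ).Adj := fun _ _ => by
  unfold strongBundle bundleStep
  infer_instance

theorem adj_iff_of_ne_seam (ℓ' : ℕ) {u v : Fin m × ZMod n} (h0 : (u.1 : ℕ) ≠ 0)
    (hm : (u.1 : ℕ) ≠ m - 1) : (strongBundle m n ℓ).Adj u v ↔ (strongBundle m n ℓ').Adj u v := by
  simp [strongBundle, bundleStep, h0, hm]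

theorem degree_eq_of_ne_seam [NeZero n] (ℓ' : ℕ) {u : Fin m × ZMod n} (h0 : (u.1 : ℕ) ≠ 0)
    (hm : (u.1 : ℕ) ≠ m - 1) : (strongBundle m n ℓ).degree u = (strongBundle m n ℓ').degree u := by
  simp only [← card_neighborFinset_eq_degree]
  congr 1
  ext v
  simp only [mem_neighborFinset, adj_iff_of_ne_seam ℓ' h0 hm]

/-- Rows are subtracted in `ℤ`, not in `ZMod m`: a seam edge has row displacement `±(m - 1)`. -/
def displacement (u v : Fin m × ZMod n) : ℤ × ZMod n :=
  (((v.1 : ℕ) : ℤ) - ((u.1 : ℕ) : ℤ), v.2 - u.2)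

theorem displacement_add (u w v : Fin m × ZMod n) :
    displacement u w + displacement w v = displacement u v := by
  ext <;> simp only [displacement, Prod.fst_add, Prod.snd_add] <;> ring

theorem displacement_eq_zero_iff {u v : Fin m × ZMod n} : displacement u v = 0 ↔ u = v := by
  simp only [displacement, Prod.ext_iff, Prod.fst_zero, Prod.snd_zero, sub_eq_zero, Fin.ext_iff,
    Int.natCast_inj, eq_comm]

theorem abs_displacement_fst_lt (u v : Fin m × ZMod n) : |(displacement u v).1| < m := by
  have := u.1.isLt
  have := v.1.isLt
  rw [displacement, abs_lt]
  omega

theorem displacement_swap (u v : Fin m × ZMod n) : displacement v u = -displacement u v := by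
  ext <;> simp only [displacement, Prod.fst_neg, Prod.snd_neg, neg_sub]

variable (m n ℓ) in
def stepDisplacements : Finset (ℤ × ZMod n) :=
  {(0, 1), (0, -1), (1, -1), (1, 0), (1, 1),
    (1 - (m : ℤ), (ℓ : ZMod n) - 1), (1 - (m : ℤ), (ℓ : ZMod n)), (1 - (m : ℤ), (ℓ : ZMod n) + 1)}

variable (m n ℓ) in
def adjDisplacements : Finset (ℤ × ZMod n) :=
  stepDisplacements m n ℓ ∪ (stepDisplacements m n ℓ).image Neg.neg

theorem displacement_mem_stepDisplacements {u v : Fin m × ZMod n} (h : bundleStep m n ℓ u v) :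
    displacement u v ∈ stepDisplacements m n ℓ := by
  obtain ⟨⟨i, hi⟩, j⟩ := u
  obtain ⟨⟨i', hi'⟩, j'⟩ := v
  have hm : 0 < m := by omega
  simp only [bundleStep, Fin.mk.injEq] at h
  rcases h with ⟨rfl, rfl | rfl⟩ | ⟨rfl, rfl | rfl | rfl⟩ | ⟨rfl, rfl, rfl | rfl | rfl⟩ <;>
    simp [stepDisplacements, displacement, add_sub_assoc, add_assoc, Nat.cast_pred hm]

theorem displacement_mem_adjDisplacements {u v : Fin m × ZMod n}
    (h : (strongBundle m n ℓ).Adj u v) :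
    displacement u v ∈ adjDisplacements m n ℓ := by
  rcases h.2 with h | h
  · exact mem_union_left _ (displacement_mem_stepDisplacements h)
  · rw [← neg_neg (displacement u v), ← displacement_swap]
    exact mem_union_right _ (mem_image_of_mem _ (displacement_mem_stepDisplacements h))

variable {α β : ZMod n}

def linearLabel (α β : ZMod n) (p : Fin m × ZMod n) : ZMod n := α * ((p.1 : ℕ) : ZMod n) + β * p.2

def labelIncrement (α β : ZMod n) (d : ℤ × ZMod n) : ZMod n := α * d.1 + β * d.2

theorem linearLabel_sub (u v : Fin m × ZMod n) :
    linearLabel α β v - linearLabel α β u = labelIncrement α β (displacement u v) := by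
  simp only [linearLabel, labelIncrement, displacement]
  push_cast
  ring

theorem linearLabel_surjective [NeZero m] (hβ : IsUnit β) :
    Function.Surjective (linearLabel α β : Fin m × ZMod n → ZMod n) := by
  obtain ⟨β, rfl⟩ := hβ
  intro x
  exact ⟨(0, ↑β⁻¹ * x), by simp [linearLabel]⟩

/-- In `hdist`, sums with row displacement `±m` are excluded: they join no two vertices. -/
theorem isL21Labeling_linearLabel [NeZero n]
    (hadj : ∀ d ∈ adjDisplacements m n ℓ, labelIncrement α β d ∉ ({-1, 0, 1} : Finset (ZMod n)))
    (hdist : ∀ d ∈ adjDisplacements m n ℓ, ∀ d' ∈ adjDisplacements m n ℓ, d + d' ≠ 0 →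
      |(d + d').1| < m → labelIncrement α β (d + d') ≠ 0) :
    IsL21Labeling (strongBundle m n ℓ) (fun p => (linearLabel α β p).val) := by
  refine isL21Labeling_val_comp _ (fun u v h => ?_) (fun u v h => ?_)
  · rw [linearLabel_sub]
    exact hadj _ (displacement_mem_adjDisplacements h)
  · obtain ⟨hne, -, w, huw, hvw⟩ := dist_eq_two_iff.mp h
    refine Ne.symm (sub_ne_zero.mp ?_)
    rw [linearLabel_sub, ← displacement_add u w v]
    refine hdist _ (displacement_mem_adjDisplacements huw) _
      (displacement_mem_adjDisplacements hvw.symm) ?_ ?_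
    · rwa [displacement_add, Ne, displacement_eq_zero_iff]
    · rw [displacement_add]
      exact abs_displacement_fst_lt u v

theorem spanOf_linearLabel [NeZero m] [NeZero n] (hβ : IsUnit β) :
    spanOf (fun p : Fin m × ZMod n => (linearLabel α β p).val) = n - 1 :=
  spanOf_val_comp_of_surjective (linearLabel_surjective hβ)

end strongBundle

open strongBundle

theorem ten_le_spanOf_strongBundle {ℓ : ℕ} {f : Fin 13 × ZMod 11 → ℕ}
    (hf : IsL21Labeling (strongBundle 13 11 ℓ) f) : 10 ≤ spanOf f := by
  have h5 : ((5 : Fin 13) : ℕ) ≠ 0 ∧ ((5 : Fin 13) : ℕ) ≠ 13 - 1 := by decide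
  have h6 : ((6 : Fin 13) : ℕ) ≠ 0 ∧ ((6 : Fin 13) : ℕ) ≠ 13 - 1 := by decide
  have hdeg (u : Fin 13 × ZMod 11) (hu : (u.1 : ℕ) ≠ 0 ∧ (u.1 : ℕ) ≠ 13 - 1)
      (h : 8 ≤ (strongBundle 13 11 0).degree u) : 8 ≤ (strongBundle 13 11 ℓ).degree u :=
    h.trans_eq (degree_eq_of_ne_seam ℓ hu.1 hu.2)
  exact hf.add_two_le_spanOf (x := (5, 5)) (y := (5, 6)) (z := (6, 5))
    ((adj_iff_of_ne_seam 0 h5.1 h5.2).mpr (by decide))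
    ((adj_iff_of_ne_seam 0 h5.1 h5.2).mpr (by decide))
    ((adj_iff_of_ne_seam 0 h5.1 h5.2).mpr (by decide))
    (hdeg _ h5 (by decide)) (hdeg _ h5 (by decide)) (hdeg _ h6 (by decide))

theorem lambda_strongBundle_C13_C11 :
    ∀ ℓ ∈ ({3, 5, 6, 8} : Set ℕ), lambdaNumber (strongBundle 13 11 ℓ) = 10 := by
  intro ℓ hℓ
  refine lambdaNumber_eq ?_ fun f hf => ten_le_spanOf_strongBundle hf
  obtain ⟨α, β, hβ, hf⟩ : ∃ α β : ZMod 11, IsUnit β ∧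
      IsL21Labeling (strongBundle 13 11 ℓ) (fun p => (linearLabel α β p).val) := by
    simp only [Set.mem_insert_iff, Set.mem_singleton_iff] at hℓ
    rcases hℓ with rfl | rfl | rfl | rfl
    · exact ⟨2, 5, IsUnit.of_mul_eq_one 9 rfl, isL21Labeling_linearLabel (by decide) (by decide)⟩
    · exact ⟨5, 2, IsUnit.of_mul_eq_one 6 rfl, isL21Labeling_linearLabel (by decide) (by decide)⟩
    · exact ⟨5, 9, IsUnit.of_mul_eq_one 5 rfl, isL21Labeling_linearLabel (by decide) (by decide)⟩
    · exact ⟨2, 6, IsUnit.of_mul_eq_one 2 rfl, isL21Labeling_linearLabel (by decide) (by decide)⟩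
  exact ⟨_, hf, spanOf_linearLabel hβ⟩
end
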